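/- The insertion operator s on Hochschild chains of Hilbert-Schmidt operators, which inserts a rank-one idempotent elementary factor at the first gap, is an isometry on gapped elementary chains: for any continuous Hochschild chain K supported on elementary chains with a gap, ‖sK‖ = ‖K‖ in the L² norm of C_p(HS). -/

import Mathlib

noncomputable section

open Classical

/-- An elementary Hilbert-Schmidt kernel symbol `e_α^i × ē_β^j`, encoded as the
pair `((α,i),(β,j))`. -/
abbrev Elem (A N : Type*) := (A × N) × (A × N)

variable {A N : Type*}

/-- An elementary `p`-chain (tuple of `p+1` elementary kernels) has an `r`-gap if
the second index pair of the `r`-th factor differs from the first index pair of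
the `(r+1)`-th factor (cyclically). -/
def Gapped {p : ℕ} (e : Fin (p + 1) → Elem A N) : Prop :=
  ∃ r : Fin (p + 1), (e r).2 ≠ (e (r + 1)).1

/-- The position of the first gap of an elementary chain (arbitrary if there is
no gap). -/
def gapIdx {p : ℕ} (e : Fin (p + 1) → Elem A N) : Fin (p + 1) :=
  if h : (Finset.univ.filter fun r : Fin (p + 1) => (e r).2 ≠ (e (r + 1)).1).Nonempty
  then (Finset.univ.filter fun r : Fin (p + 1) => (e r).2 ≠ (e (r + 1)).1).min' h
  else 0

/-- The insertion map underlying the homotopy operator `s`: it inserts the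
idempotent elementary factor `e_{β_r}^{j_r} × ē_{β_r}^{j_r}` after the position
`r` of the first gap. -/
def insTup {p : ℕ} (e : Fin (p + 1) → Elem A N) : Fin (p + 2) → Elem A N :=
  fun j =>
    if hj : (j : ℕ) ≤ (gapIdx e : ℕ) then
      e ⟨(j : ℕ), Nat.lt_of_le_of_lt hj (gapIdx e).isLt⟩
    else if (j : ℕ) = (gapIdx e : ℕ) + 1 then ((e (gapIdx e)).2, (e (gapIdx e)).2)
    else e ⟨(j : ℕ) - 1, by have := j.isLt; omega⟩

/-- The homotopy operator `s` applied to an `ℓ²` chain `K` supported on gapped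
elementary chains: on an elementary chain whose first gap is at position `r`, it
inserts the idempotent factor after position `r` and multiplies by `(−1)^r`. -/
def sOp {p : ℕ} (K : (Fin (p + 1) → Elem A N) → ℂ) :
    (Fin (p + 2) → Elem A N) → ℂ :=
  fun t =>
    if h : ∃ e : Fin (p + 1) → Elem A N, Gapped e ∧ insTup e = t then
      ((-1 : ℂ) ^ ((gapIdx h.choose : Fin (p + 1)) : ℕ)) * K h.choose
    else 0

/-! `insTup e` is `Fin.insertNth (gapIdx e).succ d e` with `d` the inserted factor, so `e` is
read back from `insTup e` along `(gapIdx e).succ.succAbove`. The inserted factor closes the first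
gap of `e` and reopens it one step later, while the earlier positions keep their entries; so the
first gap of `insTup e` is `(gapIdx e).succ`, and `insTup` is injective on gapped chains. Hence
`s` only relabels the coefficients of `K` and changes their signs. -/

namespace Fin

variable {n : ℕ}

theorem castSucc_add_one_of_ne_last {k : Fin (n + 1)} (h : k ≠ last n) :
    k.castSucc + 1 = (k + 1).castSucc := by
  ext
  simp [val_add_one, h]

theorem succ_succAbove_of_le {k r : Fin (n + 1)} (h : k ≤ r) : r.succ.succAbove k = k.castSucc :=
  succAbove_of_castSucc_lt _ _ (castSucc_lt_succ_iff.mpr h)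

theorem succ_add_one_eq_succAbove (r : Fin (n + 1)) : r.succ + 1 = r.succ.succAbove (r + 1) := by
  rcases r.eq_castSucc_or_eq_last with ⟨k, rfl⟩ | rfl
  · rw [coeSucc_eq_succ, succ_castSucc, coeSucc_eq_succ, succAbove_castSucc_of_le _ _ le_rfl]
  · simp

end Fin

section FirstGap

variable {p : ℕ} {e : Fin (p + 1) → Elem A N}

theorem gapIdx_spec (he : Gapped e) : (e (gapIdx e)).2 ≠ (e (gapIdx e + 1)).1 := by
  obtain ⟨r, hr⟩ := he
  have hne : (Finset.univ.filter fun r : Fin (p + 1) => (e r).2 ≠ (e (r + 1)).1).Nonempty :=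
    ⟨r, by simpa using hr⟩
  rw [gapIdx, dif_pos hne]
  simpa using Finset.min'_mem _ hne

theorem gapIdx_le {r : Fin (p + 1)} (hr : (e r).2 ≠ (e (r + 1)).1) : gapIdx e ≤ r := by
  have hne : (Finset.univ.filter fun r : Fin (p + 1) => (e r).2 ≠ (e (r + 1)).1).Nonempty :=
    ⟨r, by simpa using hr⟩
  rw [gapIdx, dif_pos hne]
  exact Finset.min'_le _ _ (by simpa using hr)

theorem eq_of_lt_gapIdx {i : Fin (p + 1)} (hi : i < gapIdx e) : (e i).2 = (e (i + 1)).1 := by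
  by_contra h
  exact (gapIdx_le h).not_gt hi

theorem gapIdx_eq {r : Fin (p + 1)} (hr : (e r).2 ≠ (e (r + 1)).1)
    (hmin : ∀ i < r, (e i).2 = (e (i + 1)).1) : gapIdx e = r := by
  refine (gapIdx_le hr).antisymm (not_lt.mp fun hlt => ?_)
  exact gapIdx_spec ⟨r, hr⟩ (hmin _ hlt)

end FirstGap

section Insertion

variable {p : ℕ} {e : Fin (p + 1) → Elem A N}

theorem insTup_succAbove (i : Fin (p + 1)) : insTup e ((gapIdx e).succ.succAbove i) = e i := by
  rcases le_or_gt i (gapIdx e) with hi | hi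
  · rw [Fin.succ_succAbove_of_le hi, insTup, dif_pos (by simpa using hi)]
    rfl
  · rw [Fin.succAbove_of_le_castSucc _ _ (Fin.succ_le_castSucc_iff.mpr hi), insTup,
      dif_neg (show ¬ (i.succ : ℕ) ≤ gapIdx e from not_le.mpr (Nat.lt_succ_of_lt hi)),
      if_neg (by simp [Fin.val_ne_of_ne hi.ne'])]
    rfl

theorem insTup_succ_gapIdx : insTup e (gapIdx e).succ = ((e (gapIdx e)).2, (e (gapIdx e)).2) := by
  rw [insTup, dif_neg (by simp), if_pos (by simp)]

theorem gapIdx_insTup (he : Gapped e) : gapIdx (insTup e) = (gapIdx e).succ := by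
  refine gapIdx_eq ?_ fun j hj => ?_
  · rw [Fin.succ_add_one_eq_succAbove, insTup_succAbove, insTup_succ_gapIdx]
    exact gapIdx_spec he
  · obtain ⟨k, rfl⟩ := Fin.exists_castSucc_eq.mpr (Fin.ne_last_of_lt hj)
    have hk : k ≤ gapIdx e := Fin.castSucc_lt_succ_iff.mp hj
    rcases hk.lt_or_eq with hlt | rfl
    · rw [Fin.castSucc_add_one_of_ne_last (Fin.ne_last_of_lt hlt), ← Fin.succ_succAbove_of_le hk,
        ← Fin.succ_succAbove_of_le (Fin.add_one_le_of_lt hlt), insTup_succAbove, insTup_succAbove]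
      exact eq_of_lt_gapIdx hlt
    · rw [Fin.coeSucc_eq_succ, insTup_succ_gapIdx, ← Fin.succAbove_succ_self, insTup_succAbove]

theorem insTup_injOn : Set.InjOn (insTup (A := A) (N := N) (p := p)) {e | Gapped e} := by
  intro e he e' he' h
  have hr : gapIdx e = gapIdx e' :=
    Fin.succ_injective _ (by rw [← gapIdx_insTup he, ← gapIdx_insTup he', h])
  funext i
  rw [← insTup_succAbove (e := e) i, ← insTup_succAbove (e := e') i, h, hr]

end Insertion

section Isometry

variable {p : ℕ} (K : (Fin (p + 1) → Elem A N) → ℂ)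

theorem sOp_insTup {e : Fin (p + 1) → Elem A N} (he : Gapped e) :
    sOp K (insTup e) = (-1) ^ (gapIdx e : ℕ) * K e := by
  have h : ∃ e', Gapped e' ∧ insTup e' = insTup e := ⟨e, he, rfl⟩
  have hc : h.choose = e := insTup_injOn h.choose_spec.1 he h.choose_spec.2
  simp only [sOp, dif_pos h, hc]

theorem norm_sOp_insTup {e : Fin (p + 1) → Elem A N} (he : Gapped e) :
    ‖sOp K (insTup e)‖ = ‖K e‖ := by
  rw [sOp_insTup K he, norm_mul, norm_pow, norm_neg, norm_one, one_pow, one_mul]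

theorem support_sOp_subset : Function.support (sOp K) ⊆ insTup '' {e | Gapped e} := by
  intro t ht
  by_contra h
  exact ht (dif_neg h)

end Isometry

theorem sOp_isometry_general {p : ℕ} (K : (Fin (p + 1) → Elem A N) → ℂ)
    (hsupp : ∀ e, K e ≠ 0 → Gapped e) :
    ∑' t : Fin (p + 2) → Elem A N, ‖sOp K t‖ ^ 2 =
      ∑' e : Fin (p + 1) → Elem A N, ‖K e‖ ^ 2 := by
  have hinj := (insTup_injOn (A := A) (N := N) (p := p)).injective
  have hrange : (Function.support fun t => ‖sOp K t‖ ^ 2) ⊆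
      Set.range ({e | Gapped e}.domRestrict insTup) := by
    simpa [Set.range_domRestrict] using support_sOp_subset K
  have hsuppK : (Function.support fun e => ‖K e‖ ^ 2) ⊆ {e | Gapped e} :=
    fun e he => hsupp e (by simpa using he)
  calc ∑' t, ‖sOp K t‖ ^ 2
      = ∑' e : {e | Gapped e}, ‖sOp K (insTup e.1)‖ ^ 2 := (hinj.tsum_eq hrange).symm
    _ = ∑' e : {e | Gapped e}, ‖K e‖ ^ 2 := tsum_congr fun e => by rw [norm_sOp_insTup K e.2]
    _ = ∑' e, ‖K e‖ ^ 2 := tsum_subtype_eq_of_support_subset hsuppK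

/-- **The insertion operator `s` is an isometry on gapped chains**: for any
square-summable (continuous Hochschild) chain `K` supported on gapped elementary
chains, `‖sK‖ = ‖K‖` in the `L²` norm of `C_p(HS)` (here: equality of the sums
of the squares of the coefficients). -/
theorem sOp_isometry {p : ℕ} (K : (Fin (p + 1) → Elem A N) → ℂ)
    (hsum : Summable fun e => ‖K e‖ ^ 2)
    (hsupp : ∀ e, K e ≠ 0 → Gapped e) :
    ∑' t : Fin (p + 2) → Elem A N, ‖sOp K t‖ ^ 2 =
      ∑' e : Fin (p + 1) → Elem A N, ‖K e‖ ^ 2 :=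
  sOp_isometry_general K hsupp

end
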